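/- arXiv:2309.09644 — 2 statements merged into one kernel-verified Lean document; each statement's English description precedes it below -/
import Mathlib

section
/- Let Ω ⊂ ℝⁿ be a bounded open set, let 2 < m < 3, and let u₀ : closure(Ω) → ℝ be continuous with u₀ ≥ 0 and u₀ not identically zero. Then there exists a C^∞ function u̲₀ : Ω → ℝ such that: u̲₀ is not identically zero; 0 ≤ u̲₀(x) ≤ min{u₀(x), 1} for all x ∈ Ω; the support of u̲₀ is a compact subset of Ω; and u̲₀(x)^{3−m} ≥ (m−1) Δ u̲₀(x) for all x ∈ Ω. -/
open Set Filter

/-- The Laplacian of `f : ℝⁿ → ℝ` at `x`: the sum of the second partial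
derivatives in the coordinate directions. -/
noncomputable def laplacian {n : ℕ} (f : EuclideanSpace ℝ (Fin n) → ℝ)
    (x : EuclideanSpace ℝ (Fin n)) : ℝ :=
  ∑ i : Fin n, iteratedFDeriv ℝ 2 f x ![EuclideanSpace.single i 1, EuclideanSpace.single i 1]

/-!
Near a point of `closure Ω` where `u₀ > 0` there is a closed ball `B(x₀, r) ⊆ Ω` on which `u₀`
stays above half that value. Take `f x = ε ψ(r² - ‖x - x₀‖²)` with `ψ t = exp (-1/t)` for `t > 0` (`expNegInvGlue`).
The identities `ψ' = t⁻² ψ ≥ 0` and `ψ'' = (t⁻⁴ - 2t⁻³) ψ` hold on all of `ℝ`, so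
`Δ f ≤ 4 r² t⁻⁴ f` everywhere, with no case distinction at the sphere `t = 0`. Writing
`f = f^(3-m) f^(m-2)` and using `ψ^(m-2) = exp (-(m-2)/t) ≤ 24 t⁴/(m-2)⁴`, the factor `f^(m-2)`
absorbs `t⁻⁴` as soon as `ε^(m-2) ≤ (m-2)⁴/(96 (m-1) r²)`.
-/

open Topology
open scoped Laplacian InnerProductSpace

theorem laplacian_eq_innerProductSpace_laplacian {n : ℕ} (f : EuclideanSpace ℝ (Fin n) → ℝ) :
    laplacian f = Δ f := by
  ext x
  rw [InnerProductSpace.laplacian_eq_iteratedFDeriv_orthonormalBasis _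
    (EuclideanSpace.basisFun (Fin n) ℝ)]
  simp [laplacian]

section RadialFunctions

variable {E : Type*} [NormedAddCommGroup E] [InnerProductSpace ℝ E]

theorem hasFDerivAt_norm_sub_sq (x₀ x : E) :
    HasFDerivAt (fun y ↦ ‖y - x₀‖ ^ 2) ((2 : ℝ) • innerSL ℝ (x - x₀)) x :=
  ((hasFDerivAt_id x).sub_const x₀).norm_sq.congr_fderiv (by ext; simp)

theorem iteratedFDeriv_two_comp_norm_sub_sq_apply {g g' : ℝ → ℝ} {g'' : ℝ} {x₀ x : E}
    (hg : ∀ᶠ s in 𝓝 (‖x - x₀‖ ^ 2), HasDerivAt g (g' s) s)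
    (hg' : HasDerivAt g' g'' (‖x - x₀‖ ^ 2)) (v : E) :
    iteratedFDeriv ℝ 2 (fun y ↦ g (‖y - x₀‖ ^ 2)) x ![v, v]
      = 4 * g'' * ⟪x - x₀, v⟫_ℝ ^ 2 + 2 * g' (‖x - x₀‖ ^ 2) * ‖v‖ ^ 2 := by
  have hq : Continuous fun y : E ↦ ‖y - x₀‖ ^ 2 := by fun_prop
  have hfderiv : fderiv ℝ (fun y ↦ g (‖y - x₀‖ ^ 2)) =ᶠ[𝓝 x]
      fun y ↦ g' (‖y - x₀‖ ^ 2) • (2 : ℝ) • innerSL ℝ (y - x₀) := by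
    filter_upwards [hq.continuousAt.eventually hg] with y hy
    exact (hy.comp_hasFDerivAt y (hasFDerivAt_norm_sub_sq x₀ y)).fderiv
  have hlin : HasFDerivAt (fun y : E ↦ (2 : ℝ) • innerSL ℝ (y - x₀)) ((2 : ℝ) • innerSL ℝ) x :=
    ((2 : ℝ) • innerSL ℝ : E →L[ℝ] E →L[ℝ] ℝ).hasFDerivAt.comp x
      ((hasFDerivAt_id x).sub_const x₀)
  have hhess := ((hg'.comp_hasFDerivAt x (hasFDerivAt_norm_sub_sq x₀ x)).smul hlin)
    |>.congr_of_eventuallyEq hfderiv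
  rw [iteratedFDeriv_two_apply, hhess.fderiv]
  simp only [Matrix.cons_val_zero, Matrix.cons_val_one, Function.comp_apply, add_apply,
    smul_apply, ContinuousLinearMap.smulRight_apply, innerSL_apply_apply, smul_eq_mul]
  rw [innerSL_apply_apply, real_inner_self_eq_norm_sq]
  ring

theorem laplacian_comp_norm_sub_sq [FiniteDimensional ℝ E] {g g' : ℝ → ℝ} {g'' : ℝ} {x₀ x : E}
    (hg : ∀ᶠ s in 𝓝 (‖x - x₀‖ ^ 2), HasDerivAt g (g' s) s)
    (hg' : HasDerivAt g' g'' (‖x - x₀‖ ^ 2)) :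
    Δ (fun y ↦ g (‖y - x₀‖ ^ 2)) x
      = 4 * g'' * ‖x - x₀‖ ^ 2 + 2 * Module.finrank ℝ E * g' (‖x - x₀‖ ^ 2) := by
  set b := stdOrthonormalBasis ℝ E
  rw [InnerProductSpace.laplacian_eq_iteratedFDeriv_orthonormalBasis _ b]
  simp only [iteratedFDeriv_two_comp_norm_sub_sq_apply hg hg', b.norm_eq_one,
    Finset.sum_add_distrib, ← Finset.mul_sum, b.sum_sq_inner_left, one_pow, Finset.sum_const,
    Finset.card_univ, Fintype.card_fin, nsmul_eq_mul, mul_one]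
  ring

end RadialFunctions

namespace expNegInvGlue

theorem hasDerivAt (t : ℝ) : HasDerivAt expNegInvGlue (t⁻¹ ^ 2 * expNegInvGlue t) t := by
  simpa using hasDerivAt_polynomial_eval_inv_mul 1 t

theorem hasDerivAt_inv_sq_mul (t : ℝ) :
    HasDerivAt (fun t ↦ t⁻¹ ^ 2 * expNegInvGlue t)
      ((t⁻¹ ^ 4 - 2 * t⁻¹ ^ 3) * expNegInvGlue t) t := by
  have h := hasDerivAt_polynomial_eval_inv_mul (Polynomial.X ^ 2) t
  rw [Polynomial.derivative_X_sq] at h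
  convert h using 1
  · simp
  · simp only [Polynomial.eval_mul, Polynomial.eval_pow, Polynomial.eval_sub,
      Polynomial.eval_C, Polynomial.eval_X]
    ring

theorem le_one (t : ℝ) : expNegInvGlue t ≤ 1 := by
  rcases le_or_gt t 0 with ht | ht
  · simp [zero_of_nonpos ht]
  · rw [expNegInvGlue, if_neg ht.not_ge, Real.exp_le_one_iff, neg_nonpos]
    exact inv_nonneg.2 ht.le

theorem rpow_le (t : ℝ) {a : ℝ} (ha : 0 < a) : expNegInvGlue t ^ a ≤ 24 * t ^ 4 / a ^ 4 := by
  rcases le_or_gt t 0 with ht | ht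
  · rw [zero_of_nonpos ht, Real.zero_rpow ha.ne']
    positivity
  have hexp : (a / t) ^ 4 / 24 ≤ Real.exp (a / t) := by
    simpa [Nat.factorial] using Real.pow_div_factorial_le_exp (a / t) (by positivity) 4
  rw [expNegInvGlue, if_neg ht.not_ge, ← Real.exp_mul, show -t⁻¹ * a = -(a / t) by ring,
    Real.exp_neg]
  calc (Real.exp (a / t))⁻¹ ≤ ((a / t) ^ 4 / 24)⁻¹ := by gcongr
    _ = 24 * t ^ 4 / a ^ 4 := by field_simp

end expNegInvGlue

section RadialBump

variable {E : Type*} [NormedAddCommGroup E]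

noncomputable def radialBump (x₀ : E) (r ε : ℝ) (y : E) : ℝ :=
  ε * expNegInvGlue (r ^ 2 - ‖y - x₀‖ ^ 2)

variable {x₀ : E} {r ε : ℝ}

theorem contDiff_radialBump [InnerProductSpace ℝ E] {k : ℕ∞} :
    ContDiff ℝ k (radialBump x₀ r ε) :=
  contDiff_const.mul (expNegInvGlue.contDiff.comp
    (contDiff_const.sub ((contDiff_id.sub contDiff_const).norm_sq ℝ)))

theorem radialBump_nonneg (hε : 0 ≤ ε) (y : E) : 0 ≤ radialBump x₀ r ε y :=
  mul_nonneg hε (expNegInvGlue.nonneg _)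

theorem radialBump_le (hε : 0 ≤ ε) (y : E) : radialBump x₀ r ε y ≤ ε :=
  mul_le_of_le_one_right hε (expNegInvGlue.le_one _)

theorem radialBump_self_pos (hr : 0 < r) (hε : 0 < ε) : 0 < radialBump x₀ r ε x₀ :=
  mul_pos hε (expNegInvGlue.pos_of_pos (by simpa using pow_pos hr 2))

theorem tsupport_radialBump_subset (hr : 0 ≤ r) :
    tsupport (radialBump x₀ r ε) ⊆ Metric.closedBall x₀ r := by
  refine closure_minimal (fun y hy ↦ ?_) Metric.isClosed_closedBall
  have : ‖y - x₀‖ ^ 2 < r ^ 2 := by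
    by_contra! h
    exact hy (by simp [radialBump, expNegInvGlue.zero_of_nonpos (sub_nonpos.2 h)])
  exact mem_closedBall_iff_norm.2
    (pow_lt_pow_iff_left₀ (norm_nonneg _) hr two_ne_zero |>.1 this).le

theorem laplacian_radialBump [InnerProductSpace ℝ E] [FiniteDimensional ℝ E] (x : E) :
    Δ (radialBump x₀ r ε) x =
      let t := r ^ 2 - ‖x - x₀‖ ^ 2
      ε * (4 * (t⁻¹ ^ 4 - 2 * t⁻¹ ^ 3) * ‖x - x₀‖ ^ 2 - 2 * Module.finrank ℝ E * t⁻¹ ^ 2)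
        * expNegInvGlue t := by
  have hg : ∀ s, HasDerivAt (fun s ↦ ε * expNegInvGlue (r ^ 2 - s))
      (-ε * ((r ^ 2 - s)⁻¹ ^ 2 * expNegInvGlue (r ^ 2 - s))) s := fun s ↦ by
    simpa using ((expNegInvGlue.hasDerivAt _).comp s ((hasDerivAt_id s).const_sub _)).const_mul ε
  have hg' : ∀ s, HasDerivAt (fun s ↦ -ε * ((r ^ 2 - s)⁻¹ ^ 2 * expNegInvGlue (r ^ 2 - s)))
      (ε * (((r ^ 2 - s)⁻¹ ^ 4 - 2 * (r ^ 2 - s)⁻¹ ^ 3) * expNegInvGlue (r ^ 2 - s))) s :=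
    fun s ↦ by
    simpa using ((expNegInvGlue.hasDerivAt_inv_sq_mul _).comp s
      ((hasDerivAt_id s).const_sub _)).const_mul (-ε)
  unfold radialBump
  rw [laplacian_comp_norm_sub_sq (Eventually.of_forall hg) (hg' _)]
  ring

theorem laplacian_radialBump_le [InnerProductSpace ℝ E] [FiniteDimensional ℝ E] (hε : 0 ≤ ε)
    (x : E) :
    Δ (radialBump x₀ r ε) x ≤
      4 * r ^ 2 * (r ^ 2 - ‖x - x₀‖ ^ 2)⁻¹ ^ 4 * radialBump x₀ r ε x := by
  rw [laplacian_radialBump, radialBump]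
  set t := r ^ 2 - ‖x - x₀‖ ^ 2
  rcases le_or_gt t 0 with ht0 | ht0
  · simp [expNegInvGlue.zero_of_nonpos ht0]
  have hq : ‖x - x₀‖ ^ 2 ≤ r ^ 2 := by linarith
  have key :
      4 * (t⁻¹ ^ 4 - 2 * t⁻¹ ^ 3) * ‖x - x₀‖ ^ 2 - 2 * Module.finrank ℝ E * t⁻¹ ^ 2
        ≤ 4 * r ^ 2 * t⁻¹ ^ 4 := by
    have h3 : 0 ≤ t⁻¹ ^ 3 * ‖x - x₀‖ ^ 2 := by positivity
    have h4 : t⁻¹ ^ 4 * ‖x - x₀‖ ^ 2 ≤ t⁻¹ ^ 4 * r ^ 2 := by gcongr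
    have h2 : 0 ≤ (Module.finrank ℝ E : ℝ) * t⁻¹ ^ 2 := by positivity
    linarith
  calc _ = (4 * (t⁻¹ ^ 4 - 2 * t⁻¹ ^ 3) * ‖x - x₀‖ ^ 2 - 2 * Module.finrank ℝ E * t⁻¹ ^ 2)
        * (ε * expNegInvGlue t) := by ring
    _ ≤ 4 * r ^ 2 * t⁻¹ ^ 4 * (ε * expNegInvGlue t) :=
      mul_le_mul_of_nonneg_right key (mul_nonneg hε (expNegInvGlue.nonneg t))

theorem radialBump_subsolution [InnerProductSpace ℝ E] [FiniteDimensional ℝ E] {m : ℝ}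
    (hm : 2 < m) (hε : 0 < ε) (hεr : ε ^ (m - 2) ≤ (m - 2) ^ 4 / (96 * (m - 1) * r ^ 2))
    (x : E) :
    (m - 1) * Δ (radialBump x₀ r ε) x ≤ radialBump x₀ r ε x ^ (3 - m) := by
  refine (mul_le_mul_of_nonneg_left (laplacian_radialBump_le hε.le x) (by linarith)).trans ?_
  rw [radialBump]
  set t := r ^ 2 - ‖x - x₀‖ ^ 2
  rcases le_or_gt t 0 with ht | ht
  · simp only [expNegInvGlue.zero_of_nonpos ht, mul_zero]
    exact Real.rpow_nonneg le_rfl _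
  have hr : r ≠ 0 := by
    rintro rfl
    linarith [sq_nonneg ‖x - x₀‖]
  set f := ε * expNegInvGlue t
  have hf : 0 < f := mul_pos hε (expNegInvGlue.pos_of_pos ht)
  have hsplit : f = f ^ (3 - m) * f ^ (m - 2) := by
    rw [← Real.rpow_add hf]
    norm_num
  have hsmall : f ^ (m - 2) ≤ t ^ 4 / (4 * (m - 1) * r ^ 2) := by
    have hm2 : 0 < m - 2 := by linarith
    rw [Real.mul_rpow hε.le (expNegInvGlue.nonneg _)]
    calc ε ^ (m - 2) * expNegInvGlue t ^ (m - 2)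
        ≤ (m - 2) ^ 4 / (96 * (m - 1) * r ^ 2) * (24 * t ^ 4 / (m - 2) ^ 4) :=
          mul_le_mul hεr (expNegInvGlue.rpow_le t hm2)
            (Real.rpow_nonneg (expNegInvGlue.nonneg t) _) ((Real.rpow_nonneg hε.le _).trans hεr)
      _ = t ^ 4 / (4 * (m - 1) * r ^ 2) := by
          field_simp
          ring
  have hcoeff : (m - 1) * 4 * r ^ 2 * t⁻¹ ^ 4 * f ^ (m - 2) ≤ 1 := by
    have hm1 : 0 < m - 1 := by linarith
    calc (m - 1) * 4 * r ^ 2 * t⁻¹ ^ 4 * f ^ (m - 2)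
        ≤ (m - 1) * 4 * r ^ 2 * t⁻¹ ^ 4 * (t ^ 4 / (4 * (m - 1) * r ^ 2)) :=
          mul_le_mul_of_nonneg_left hsmall (by positivity)
      _ = 1 := by field_simp
  calc (m - 1) * (4 * r ^ 2 * t⁻¹ ^ 4 * f)
      = f ^ (3 - m) * ((m - 1) * 4 * r ^ 2 * t⁻¹ ^ 4 * f ^ (m - 2)) := by
        conv_lhs => rw [hsplit]
        ring
    _ ≤ f ^ (3 - m) := mul_le_of_le_one_right (by positivity) hcoeff

end RadialBump

theorem exists_closedBall_subset_inter_of_mem_nhdsWithin_closure {X : Type*}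
    [PseudoMetricSpace X] {Ω s : Set X} (hΩ : IsOpen Ω) {z : X} (hz : z ∈ closure Ω)
    (hs : s ∈ 𝓝[closure Ω] z) : ∃ x₀ r, 0 < r ∧ Metric.closedBall x₀ r ⊆ Ω ∩ s := by
  obtain ⟨V, hV, hzV, hVs⟩ := mem_nhdsWithin.1 hs
  obtain ⟨x₀, hx₀V, hx₀Ω⟩ := _root_.mem_closure_iff.1 hz V hV hzV
  obtain ⟨r, hr, hball⟩ :=
    Metric.nhds_basis_closedBall.mem_iff.1 ((hV.inter hΩ).mem_nhds ⟨hx₀V, hx₀Ω⟩)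
  exact ⟨x₀, r, hr, fun y hy ↦ ⟨(hball hy).2, hVs ⟨(hball hy).1, subset_closure (hball hy).2⟩⟩⟩

theorem eventually_rpow_le {k A : ℝ} (hk : 0 < k) (hA : 0 < A) : ∀ᶠ ε in 𝓝 0, ε ^ k ≤ A := by
  have h := (Real.continuousAt_rpow_const 0 k (Or.inr hk.le)).tendsto
  rw [Real.zero_rpow hk.ne'] at h
  exact h.eventually (eventually_le_nhds hA)

theorem initial_subsolution_exists_general (n : ℕ) (Ω : Set (EuclideanSpace ℝ (Fin n)))
    (hΩo : IsOpen Ω)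
    (m : ℝ) (hm2 : 2 < m)
    (u₀ : EuclideanSpace ℝ (Fin n) → ℝ)
    (hu₀c : ContinuousOn u₀ (closure Ω))
    (hu₀nonneg : ∀ x ∈ closure Ω, 0 ≤ u₀ x)
    (hu₀ne : ∃ x ∈ closure Ω, u₀ x ≠ 0) :
    ∃ f : EuclideanSpace ℝ (Fin n) → ℝ,
      ContDiff ℝ (⊤ : ℕ∞) f ∧
      (∃ x ∈ Ω, f x ≠ 0) ∧
      (∀ x ∈ Ω, 0 ≤ f x ∧ f x ≤ min (u₀ x) 1) ∧
      IsCompact (tsupport f) ∧ tsupport f ⊆ Ω ∧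
      (∀ x ∈ Ω, (m - 1) * laplacian f x ≤ f x ^ (3 - m)) := by
  obtain ⟨z, hz, hz0⟩ := hu₀ne
  have hz_pos : 0 < u₀ z := (hu₀nonneg z hz).lt_of_ne' hz0
  obtain ⟨x₀, r, hr, hball⟩ := exists_closedBall_subset_inter_of_mem_nhdsWithin_closure hΩo hz
    (hu₀c z hz (Ioi_mem_nhds (half_lt_self hz_pos)))
  have hA : 0 < (m - 2) ^ 4 / (96 * (m - 1) * r ^ 2) := by
    have : 0 < m - 1 := by linarith
    have : 0 < m - 2 := by linarith
    positivity
  obtain ⟨ε, ⟨hεc, hε1, hεA⟩, hε⟩ :=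
    (((eventually_le_nhds (half_pos hz_pos)).and ((eventually_le_nhds one_pos).and
      (eventually_rpow_le (k := m - 2) (by linarith) hA))).filter_mono nhdsWithin_le_nhds
      |>.and (self_mem_nhdsWithin (s := Ioi 0))).exists
  have htsupport := tsupport_radialBump_subset (x₀ := x₀) (ε := ε) hr.le
  refine ⟨radialBump x₀ r ε, contDiff_radialBump,
    ⟨x₀, (hball (Metric.mem_closedBall_self hr.le)).1, (radialBump_self_pos hr hε).ne'⟩,
    fun x hx ↦ ⟨radialBump_nonneg hε.le x, ?_⟩,
    (isCompact_closedBall x₀ r).of_isClosed_subset (isClosed_tsupport _) htsupport,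
    htsupport.trans fun y hy ↦ (hball hy).1,
    fun x _ ↦ laplacian_eq_innerProductSpace_laplacian _ ▸ radialBump_subsolution hm2 hε hεA x⟩
  by_cases hxB : x ∈ Metric.closedBall x₀ r
  · exact (radialBump_le hε.le x).trans (le_min (hεc.trans (hball hxB).2.le) hε1)
  · rw [image_eq_zero_of_notMem_tsupport (fun h ↦ hxB (htsupport h))]
    exact le_min (hu₀nonneg x (subset_closure hx)) zero_le_one

/-- Lemma 2.1, case `2 < m < 3`: given `u₀` continuous and nonnegative on
`closure Ω`, not identically zero, there is a smooth function `u̲₀`, not identically zero,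
with `0 ≤ u̲₀ ≤ min {u₀, 1}` on `Ω`, compactly supported in `Ω`, satisfying
`u̲₀^{3−m} ≥ (m−1) Δ u̲₀` on `Ω`. -/
theorem initial_subsolution_exists (n : ℕ) (Ω : Set (EuclideanSpace ℝ (Fin n)))
    (hΩo : IsOpen Ω) (hΩb : Bornology.IsBounded Ω)
    (m : ℝ) (hm2 : 2 < m) (hm3 : m < 3)
    (u₀ : EuclideanSpace ℝ (Fin n) → ℝ)
    (hu₀c : ContinuousOn u₀ (closure Ω))
    (hu₀nonneg : ∀ x ∈ closure Ω, 0 ≤ u₀ x)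
    (hu₀ne : ∃ x ∈ closure Ω, u₀ x ≠ 0) :
    ∃ f : EuclideanSpace ℝ (Fin n) → ℝ,
      ContDiff ℝ (⊤ : ℕ∞) f ∧
      (∃ x ∈ Ω, f x ≠ 0) ∧
      (∀ x ∈ Ω, 0 ≤ f x ∧ f x ≤ min (u₀ x) 1) ∧
      IsCompact (tsupport f) ∧ tsupport f ⊆ Ω ∧
      (∀ x ∈ Ω, (m - 1) * laplacian f x ≤ f x ^ (3 - m)) :=
  initial_subsolution_exists_general n Ω hΩo m hm2 u₀ hu₀c hu₀nonneg hu₀ne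
end

section
/- Let Ω ⊂ ℝⁿ be a bounded open set, T > 0, m ≥ 3, k > 0. Let u₀, v₀ : closure(Ω) → ℝ be continuous with u₀ ≥ 0, v₀ ≥ 0 and u₀ v₀ ≡ 0, and let δ > ‖v₀‖_{C(closure(Ω))} e^{−1}. Let u̲ : closure(Ω) × [0,T] → ℝ be continuous, C² in x and C¹ in t on Ω × (0,T] with t ↦ u̲(x,t) of class C¹ on [0,T] for each x ∈ Ω, and suppose: ∂ₜ u̲ = Δ u̲ in Ω × (0,T]; u̲(x,t) = 0 for x ∈ ∂Ω; 0 ≤ u̲(x,0) ≤ min{u₀(x),1} for x ∈ Ω; 0 ≤ u̲ ≤ 1; u̲ > 0 in Ω × (0,T]; and 2 ∂ₜ u̲(x,t) ≤ 1 for all x ∈ Ω, t ∈ [0,T]. Let u : closure(Ω) × [0,T] → ℝ be continuous with 0 ≤ u ≤ ‖u₀‖_{C(closure(Ω))}, C² in x and C¹ in t on Ω × (0,T], and suppose u satisfies ∂ₜ u(x,t) = Δ u(x,t) − k v₀(x) u(x,t)^m exp(−k ∫₀ᵗ u(x,τ) dτ) in Ω × (0,T], u(x,t) = 0 for x ∈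 ∂Ω and t ∈ (0,T], and u(·,0) = u₀. Then u(x,t) ≥ e^{−δt} u̲(x,t) for all (x,t) ∈ closure(Ω) × [0,T]. -/
/-!
For small `ε > 0` the gap `Z = u - exp (-δ t) u̲ + ε (1 + t)` stays positive. Otherwise let `t₀`
be the first time at which it vanishes, at a point `x₀`; the boundary and initial data force
`x₀ ∈ Ω` and `t₀ > 0`. Since `Z (·, t₀)` is minimal at `x₀` and `Z (x₀, ·)` on `[0, t₀]` is
minimal at `t₀`, the heat equation for `u̲` gives `δ exp (-δ t₀) a + ε ≤ k v₀ u^m exp (-k ∫₀^t₀ u)`,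
where `a = u̲ (x₀, t₀)`. So `v₀ x₀ > 0`, hence `u₀ x₀ = 0` and `u̲ (x₀, 0) = 0`. As `∂ₜ u̲ ≤ 1/2`,
this gives `u̲ (x₀, τ) ≥ a - (t₀ - τ)/2` on `[t₀ - 2a, t₀]`, so `∫₀^t₀ u ≥ exp (-δ t₀) a² - O(ε)`.
With `u ≤ exp (-δ t₀) a ≤ 1`, `m ≥ 3` and `y exp (-y) ≤ exp (-1)`, the reaction term is at most
`‖v₀‖ exp (-1) exp (O(ε)) exp (-δ t₀) a < δ exp (-δ t₀) a`, a contradiction. Let `ε → 0`.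
-/

open Set Filter

/-- The supremum norm of `f` on the set `s`. -/
noncomputable def supNorm {n : ℕ} (f : EuclideanSpace ℝ (Fin n) → ℝ)
    (s : Set (EuclideanSpace ℝ (Fin n))) : ℝ :=
  sSup ((fun x => |f x|) '' s)

open Topology Real intervalIntegral

theorem IsLocalMin.nonneg_of_hasDerivAt_of_hasDerivAt {g g' : ℝ → ℝ} {a G : ℝ}
    (hmin : IsLocalMin g a) (hg : ∀ᶠ s in 𝓝 a, HasDerivAt g (g' s) s)
    (hg' : HasDerivAt g' G a) : 0 ≤ G := by
  by_contra! hG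
  have hg'a : g' a = 0 := hmin.hasDerivAt_eq_zero hg.self_of_nhds
  have hneg : ∀ᶠ s in 𝓝[>] a, g' s < 0 := by
    filter_upwards [nhdsGT_le_nhdsNE a
      ((hasDerivAt_iff_tendsto_slope.1 hg').eventually (gt_mem_nhds hG)),
      self_mem_nhdsWithin] with s hs has
    rw [slope_def_field, hg'a, sub_zero] at hs
    exact neg_of_div_neg_left hs (sub_pos.2 has).le
  obtain ⟨b, hab, hb⟩ := mem_nhdsGT_iff_exists_Ioo_subset.1
    (((hg.and hmin).filter_mono nhdsWithin_le_nhds).and hneg)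
  set s := (a + b) / 2
  have has : a < s := by simp only [s]; linarith [mem_Ioi.1 hab]
  have hs_lt : s < b := by simp only [s]; linarith [mem_Ioi.1 hab]
  have hIcc : Icc a s ⊆ insert a (Ioo a b) := by
    intro t ht
    rcases ht.1.eq_or_lt with rfl | h
    · exact mem_insert _ _
    · exact mem_insert_of_mem _ ⟨h, ht.2.trans_lt hs_lt⟩
  have hanti : StrictAntiOn g (Icc a s) := by
    refine strictAntiOn_of_hasDerivWithinAt_neg (convex_Icc a s) (f' := g') ?_ ?_ ?_
    · intro t ht
      rcases hIcc ht with rfl | ht'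
      · exact hg.self_of_nhds.continuousAt.continuousWithinAt
      · exact (hb ht').1.1.continuousAt.continuousWithinAt
    · intro t ht
      rw [interior_Icc] at ht ⊢
      exact (hb (Ioo_subset_Ioo_right hs_lt.le ht)).1.1.hasDerivWithinAt
    · intro t ht
      rw [interior_Icc] at ht
      exact (hb (Ioo_subset_Ioo_right hs_lt.le ht)).2
  have hs : s ∈ Ioo a b := ⟨has, hs_lt⟩
  exact (hanti (left_mem_Icc.2 has.le) (right_mem_Icc.2 has.le) has).not_ge (hb hs).1.2

theorem IsLocalMin.iteratedFDeriv_two_nonneg {E : Type*} [NormedAddCommGroup E]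
    [NormedSpace ℝ E] {f : E → ℝ} {x : E} (hmin : IsLocalMin f x) (hf : ContDiffAt ℝ 2 f x)
    (v : E) : 0 ≤ iteratedFDeriv ℝ 2 f x ![v, v] := by
  rw [iteratedFDeriv_two_apply]
  have hline : ∀ s : ℝ, HasDerivAt (fun t : ℝ => x + t • v) v s := fun s => by
    simpa using ((hasDerivAt_id s).smul_const v).const_add x
  have hline0 : Tendsto (fun t : ℝ => x + t • v) (𝓝 0) (𝓝 x) := by
    simpa using (hline 0).continuousAt.tendsto
  have hdiff : ∀ᶠ y in 𝓝 x, DifferentiableAt ℝ f y :=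
    (hf.eventually (by simp)).mono fun y hy => hy.differentiableAt (by simp)
  have hdiff2 : DifferentiableAt ℝ (fderiv ℝ f) x :=
    (hf.fderiv_right (m := 1) (by norm_num)).differentiableAt (by simp)
  refine IsLocalMin.nonneg_of_hasDerivAt_of_hasDerivAt (g := fun t => f (x + t • v))
    (g' := fun t => fderiv ℝ f (x + t • v) v) (a := 0) ?_ ?_ ?_
  · have hmin' : IsLocalMin f (x + (0 : ℝ) • v) := by simpa using hmin
    exact hmin'.comp_continuous (g := fun t : ℝ => x + t • v) (hline 0).continuousAt
  · filter_upwards [hline0 hdiff] with s hs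
    exact hs.hasFDerivAt.comp_hasDerivAt s (hline s)
  · have hx : HasFDerivAt (fun y => fderiv ℝ f y v) ((fderiv ℝ (fderiv ℝ f) x).flip v)
        (x + (0 : ℝ) • v) := by
      simpa using hdiff2.hasFDerivAt.clm_apply (hasFDerivAt_const v x)
    exact hx.comp_hasDerivAt 0 (hline 0)

theorem IsLocalMin.laplacian_nonneg {n : ℕ} {f : EuclideanSpace ℝ (Fin n) → ℝ}
    {x : EuclideanSpace ℝ (Fin n)} (hmin : IsLocalMin f x) (hf : ContDiffAt ℝ 2 f x) :
    0 ≤ laplacian f x :=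
  Finset.sum_nonneg fun _ _ => hmin.iteratedFDeriv_two_nonneg hf _

theorem laplacian_sub_const_mul {n : ℕ} {f g : EuclideanSpace ℝ (Fin n) → ℝ}
    {x : EuclideanSpace ℝ (Fin n)} (hf : ContDiffAt ℝ 2 f x) (hg : ContDiffAt ℝ 2 g x) (c : ℝ) :
    laplacian (fun y => f y - c * g y) x = laplacian f x - c * laplacian g x := by
  have hcg : ContDiffAt ℝ 2 (fun y => c • g y) x := hg.const_smul c
  simp only [laplacian, Finset.mul_sum, ← Finset.sum_sub_distrib]
  refine Finset.sum_congr rfl fun i _ => ?_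
  change iteratedFDeriv ℝ 2 (fun y => f y - c • g y) x _ = _
  rw [fun_iteratedFDeriv_sub_apply hf hcg, iteratedFDeriv_const_smul_apply' hg]
  rfl

theorem IsMinOn.hasDerivWithinAt_nonpos_right {f : ℝ → ℝ} {a b D : ℝ} (hab : a < b)
    (hmin : IsMinOn f (Icc a b) b) (hf : HasDerivWithinAt f D (Icc a b) b) : D ≤ 0 := by
  have hcone : a - b ∈ posTangentConeAt (Icc a b) b :=
    sub_mem_posTangentConeAt_of_segment_subset ((convex_Icc a b).segment_subset
      (right_mem_Icc.2 hab.le) (left_mem_Icc.2 hab.le))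
  have := hmin.localize.hasFDerivWithinAt_nonneg hf hcone
  simp only [ContinuousLinearMap.toSpanSingleton_apply, smul_eq_mul] at this
  nlinarith

theorem abs_le_supNorm {n : ℕ} {f : EuclideanSpace ℝ (Fin n) → ℝ}
    {s : Set (EuclideanSpace ℝ (Fin n))} (hs : IsCompact s) (hf : ContinuousOn f s)
    {x : EuclideanSpace ℝ (Fin n)} (hx : x ∈ s) : |f x| ≤ supNorm f s :=
  le_csSup (hs.bddAbove_image hf.abs) ⟨x, hx, rfl⟩

theorem exists_first_zero_of_pos_at_zero {X : Type*} [TopologicalSpace X] {s : Set X}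
    (hs : IsCompact s) {T : ℝ} {Z : X → ℝ → ℝ}
    (hZ : ContinuousOn (fun p : X × ℝ => Z p.1 p.2) (s ×ˢ Icc 0 T))
    (h0 : ∀ x ∈ s, 0 < Z x 0) (hneg : ∃ x ∈ s, ∃ t ∈ Icc 0 T, Z x t ≤ 0) :
    ∃ x₀ ∈ s, ∃ t₀ ∈ Ioc 0 T, Z x₀ t₀ = 0 ∧ ∀ x ∈ s, ∀ t ∈ Icc 0 t₀, 0 ≤ Z x t := by
  obtain ⟨x₁, hx₁, t₁, ht₁, hZ₁⟩ := hneg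
  have hK : IsCompact (s ×ˢ Icc 0 T) := hs.prod isCompact_Icc
  have hS : IsCompact (s ×ˢ Icc 0 T ∩ (fun p : X × ℝ => Z p.1 p.2) ⁻¹' Iic 0) :=
    hZ.lowerSemicontinuousOn.isCompact_inter_preimage_Iic hK 0
  obtain ⟨⟨x₀, t₀⟩, ⟨⟨hx₀, ht₀⟩, hZ₀ : Z x₀ t₀ ≤ 0⟩, hfirst⟩ :=
    hS.exists_isMinOn ⟨(x₁, t₁), ⟨hx₁, ht₁⟩, hZ₁⟩ continuous_snd.continuousOn
  have hbefore : ∀ x ∈ s, ∀ t ∈ Icc 0 T, t < t₀ → 0 < Z x t := fun x hx t ht hlt => by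
    by_contra! h
    exact (isMinOn_iff.1 hfirst (x, t) ⟨⟨hx, ht⟩, h⟩).not_gt hlt
  have ht₀pos : 0 < t₀ := ht₀.1.lt_of_ne fun h => (h0 x₀ hx₀).not_ge (h ▸ hZ₀)
  have hnonneg : ∀ x ∈ s, ∀ t ∈ Icc 0 t₀, 0 ≤ Z x t := by
    intro x hx t ht
    have hZx : ContinuousOn (Z x) (Icc 0 t₀) :=
      hZ.comp (continuous_const.prodMk continuous_id).continuousOn
        fun τ hτ => ⟨hx, hτ.1, hτ.2.trans ht₀.2⟩
    refine ContinuousWithinAt.closure_le (s := Ico 0 t₀) (f := fun _ => 0) ?_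
      continuousWithinAt_const ((hZx t ht).mono Ico_subset_Icc_self) fun τ hτ =>
        (hbefore x hx τ ⟨hτ.1, hτ.2.le.trans ht₀.2⟩ hτ.2).le
    rwa [closure_Ico ht₀pos.ne]
  exact ⟨x₀, hx₀, t₀, ⟨ht₀pos, ht₀.2⟩, le_antisymm hZ₀ (hnonneg x₀ hx₀ t₀ ⟨ht₀pos.le, le_rfl⟩),
    hnonneg⟩

theorem sq_le_integral_of_two_mul_deriv_le_one {f f' : ℝ → ℝ} {t : ℝ} (ht : 0 ≤ t)
    (hf : ∀ τ ∈ Icc 0 t, HasDerivWithinAt f (f' τ) (Icc 0 t) τ)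
    (hf' : ∀ τ ∈ Icc 0 t, 2 * f' τ ≤ 1) (hf0 : f 0 = 0) (hnonneg : ∀ τ ∈ Icc 0 t, 0 ≤ f τ) :
    f t ^ 2 ≤ ∫ τ in 0..t, f τ := by
  have hcont : ContinuousOn f (Icc 0 t) := fun τ hτ => (hf τ hτ).continuousWithinAt
  have hanti : AntitoneOn (fun τ => f τ - τ / 2) (Icc 0 t) := by
    refine antitoneOn_of_hasDerivWithinAt_nonpos (convex_Icc 0 t) (f' := fun τ => f' τ - 1 / 2)
      (hcont.sub (continuousOn_id.div_const 2)) (fun τ hτ => ?_) fun τ hτ => ?_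
    · rw [interior_Icc] at hτ ⊢
      exact ((hf τ (Ioo_subset_Icc_self hτ)).mono Ioo_subset_Icc_self).sub
        ((hasDerivWithinAt_id τ _).div_const 2)
    · rw [interior_Icc] at hτ
      linarith [hf' τ (Ioo_subset_Icc_self hτ)]
  set a := f t
  have h2a : 2 * a ≤ t := by
    have := hanti (left_mem_Icc.2 ht) (right_mem_Icc.2 ht) ht
    simp only [hf0] at this
    linarith
  have ha : 0 ≤ a := hnonneg t (right_mem_Icc.2 ht)
  have hsub : Icc 0 (t - 2 * a) ⊆ Icc 0 t := Icc_subset_Icc_right (by linarith)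
  have hsub' : Icc (t - 2 * a) t ⊆ Icc 0 t := Icc_subset_Icc_left (by linarith)
  have hint : ∀ p q, p ∈ Icc 0 t → q ∈ Icc 0 t → IntervalIntegrable f MeasureTheory.volume p q :=
    fun p q hp hq => (hcont.mono (uIcc_subset_Icc hp hq)).intervalIntegrable
  have hlinear : ∫ τ in (t - 2 * a)..t, (a - (t - τ) / 2) = a ^ 2 := by
    rw [integral_comp_sub_left (fun s => a - s / 2)]
    simp only [sub_self, sub_sub_cancel, integral_sub, intervalIntegrable_const,
      intervalIntegrable_id.div_const, integral_const, integral_div, integral_id, smul_eq_mul]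
    ring
  rw [← integral_add_adjacent_intervals (b := t - 2 * a) (hint _ _ (left_mem_Icc.2 ht)
    (hsub (right_mem_Icc.2 (by linarith)))) (hint _ _ (hsub' (left_mem_Icc.2 (by linarith)))
    (right_mem_Icc.2 ht))]
  have hfirst : 0 ≤ ∫ τ in 0..(t - 2 * a), f τ :=
    integral_nonneg (by linarith) fun τ hτ => hnonneg τ (hsub hτ)
  have hsecond : a ^ 2 ≤ ∫ τ in (t - 2 * a)..t, f τ := by
    rw [← hlinear]
    refine integral_mono_on (by linarith) ((by fun_prop : Continuous _).intervalIntegrable _ _)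
      (hint _ _ (hsub' (left_mem_Icc.2 (by linarith))) (right_mem_Icc.2 ht)) fun τ hτ => ?_
    have := hanti (hsub' hτ) (right_mem_Icc.2 ht) hτ.2
    simp only at this
    linarith
  linarith

theorem mul_rpow_mul_exp_neg_le {k v N u b y η m I : ℝ} (hk : 0 ≤ k) (hv : 0 ≤ v)
    (hvN : v ≤ N) (hu : 0 ≤ u) (hub : u ≤ b) (hb : b ≤ 1) (hm : 3 ≤ m) (hby : b ^ 2 ≤ y)
    (hI : y - η ≤ I) :
    k * v * u ^ m * exp (-(k * I)) ≤ N * exp (-1) * exp (k * η) * b := by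
  have hb0 : 0 ≤ b := hu.trans hub
  have hy0 : 0 ≤ y := (sq_nonneg b).trans hby
  have hum : u ^ m ≤ b * y :=
    calc u ^ m ≤ b ^ m := rpow_le_rpow hu hub (by linarith)
      _ ≤ b ^ (3 : ℝ) := rpow_le_rpow_of_exponent_ge' hb0 hb (by norm_num) hm
      _ = b * b ^ 2 := by rw [show (3 : ℝ) = (3 : ℕ) by norm_num, rpow_natCast]; ring
      _ ≤ b * y := mul_le_mul_of_nonneg_left hby hb0
  have hexp : exp (-(k * I)) ≤ exp (-(k * y)) * exp (k * η) := by
    rw [← exp_add]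
    exact exp_le_exp.2 (by nlinarith)
  calc k * v * u ^ m * exp (-(k * I)) ≤ k * v * (b * y) * (exp (-(k * y)) * exp (k * η)) := by
        gcongr
    _ = v * b * exp (k * η) * (k * y * exp (-(k * y))) := by ring
    _ ≤ N * b * exp (k * η) * exp (-1) := by
        have := hv.trans hvN
        gcongr
        · exact mul_exp_neg_le_exp_neg_one _
    _ = N * exp (-1) * exp (k * η) * b := by ring

noncomputable def comparisonGap {X : Type*} (u w : X → ℝ → ℝ) (δ ε : ℝ) (x : X) (t : ℝ) : ℝ :=
  u x t - exp (-δ * t) * w x t + ε * (1 + t)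

theorem add_le_of_isMinOn_comparisonGap {n : ℕ} {Ω : Set (EuclideanSpace ℝ (Fin n))}
    (hΩ : IsOpen Ω) {u w : EuclideanSpace ℝ (Fin n) → ℝ → ℝ} {x₀ : EuclideanSpace ℝ (Fin n)}
    {t₀ δ ε R : ℝ} (hx₀ : x₀ ∈ Ω) (ht₀ : 0 < t₀)
    (hu : ContDiffOn ℝ 2 (fun y => u y t₀) Ω) (hw : ContDiffOn ℝ 2 (fun y => w y t₀) Ω)
    (hut : HasDerivWithinAt (u x₀) (laplacian (fun y => u y t₀) x₀ - R) (Icc 0 t₀) t₀)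
    (hwt : HasDerivWithinAt (w x₀) (laplacian (fun y => w y t₀) x₀) (Icc 0 t₀) t₀)
    (hmin_x : IsMinOn (fun y => comparisonGap u w δ ε y t₀) Ω x₀)
    (hmin_t : IsMinOn (comparisonGap u w δ ε x₀) (Icc 0 t₀) t₀) :
    δ * (exp (-δ * t₀) * w x₀ t₀) + ε ≤ R := by
  set c := exp (-δ * t₀)
  have hu₀ : ContDiffAt ℝ 2 (fun y => u y t₀) x₀ := hu.contDiffAt (hΩ.mem_nhds hx₀)
  have hw₀ : ContDiffAt ℝ 2 (fun y => w y t₀) x₀ := hw.contDiffAt (hΩ.mem_nhds hx₀)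
  have hlap : c * laplacian (fun y => w y t₀) x₀ ≤ laplacian (fun y => u y t₀) x₀ := by
    have hF : IsMinOn (fun y => u y t₀ - c * w y t₀) Ω x₀ := isMinOn_iff.2 fun y hy => by
      have := isMinOn_iff.1 hmin_x y hy
      simp only [comparisonGap] at this
      linarith
    have := (hF.isLocalMin (hΩ.mem_nhds hx₀)).laplacian_nonneg (hu₀.sub (hw₀.const_smul c))
    rw [laplacian_sub_const_mul hu₀ hw₀] at this
    linarith
  have hexp : HasDerivWithinAt (fun t => exp (-δ * t)) (c * (-δ)) (Icc 0 t₀) t₀ :=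
    ((hasDerivAt_id' t₀).const_mul (-δ)).exp.hasDerivWithinAt.congr_deriv (by ring)
  have hlin : HasDerivWithinAt (fun t => ε * (1 + t)) ε (Icc 0 t₀) t₀ := by
    simpa using ((hasDerivWithinAt_id t₀ _).const_add 1).const_mul ε
  have hdt := hmin_t.hasDerivWithinAt_nonpos_right ht₀ ((hut.sub (hexp.mul hwt)).add hlin)
  linarith

theorem reaction_le_of_comparisonGap_eq_zero {X : Type*} {u w : X → ℝ → ℝ} {x₀ : X}
    {w' : ℝ → ℝ} {t₀ T δ ε k v N m : ℝ} (ht₀ : 0 < t₀) (ht₀T : t₀ ≤ T) (hδ : 0 ≤ δ)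
    (hε : 0 ≤ ε) (hk : 0 ≤ k) (hv : 0 ≤ v) (hvN : v ≤ N) (hm : 3 ≤ m)
    (hu : ContinuousOn (u x₀) (Icc 0 t₀)) (hu₀ : 0 ≤ u x₀ t₀)
    (hw : ∀ τ ∈ Icc 0 t₀, HasDerivWithinAt (w x₀) (w' τ) (Icc 0 t₀) τ)
    (hw' : ∀ τ ∈ Icc 0 t₀, 2 * w' τ ≤ 1) (hw0 : w x₀ 0 = 0)
    (hw01 : ∀ τ ∈ Icc 0 t₀, 0 ≤ w x₀ τ ∧ w x₀ τ ≤ 1)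
    (hgap : ∀ τ ∈ Icc 0 t₀, 0 ≤ comparisonGap u w δ ε x₀ τ)
    (hgap₀ : comparisonGap u w δ ε x₀ t₀ = 0) :
    k * v * u x₀ t₀ ^ m * exp (-(k * ∫ τ in 0..t₀, u x₀ τ))
      ≤ N * exp (-1) * exp (k * (T * (1 + T) * ε)) * (exp (-δ * t₀) * w x₀ t₀) := by
  set c := exp (-δ * t₀)
  set a := w x₀ t₀
  have hc1 : c ≤ 1 := exp_le_one_iff.2 (by nlinarith)
  have ha : 0 ≤ a ∧ a ≤ 1 := hw01 t₀ (right_mem_Icc.2 ht₀.le)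
  have hua : u x₀ t₀ ≤ c * a := by
    simp only [comparisonGap] at hgap₀
    nlinarith
  have hsq : a ^ 2 ≤ ∫ τ in 0..t₀, w x₀ τ :=
    sq_le_integral_of_two_mul_deriv_le_one ht₀.le hw hw' hw0 fun τ hτ => (hw01 τ hτ).1
  have hwint : IntervalIntegrable (w x₀) MeasureTheory.volume 0 t₀ :=
    (ContinuousOn.intervalIntegrable_of_Icc ht₀.le fun τ hτ => (hw τ hτ).continuousWithinAt)
  have hI : c * a ^ 2 - T * (1 + T) * ε ≤ ∫ τ in 0..t₀, u x₀ τ :=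
    calc c * a ^ 2 - T * (1 + T) * ε ≤ c * (∫ τ in 0..t₀, w x₀ τ) - t₀ * (ε * (1 + T)) := by
          have : t₀ * (ε * (1 + T)) ≤ T * (1 + T) * ε := by
            nlinarith [mul_nonneg hε (by linarith : (0 : ℝ) ≤ 1 + T)]
          nlinarith [exp_pos (-δ * t₀)]
      _ = ∫ τ in 0..t₀, (c * w x₀ τ - ε * (1 + T)) := by
          rw [integral_sub (hwint.const_mul c) intervalIntegrable_const, integral_const_mul,
            integral_const, smul_eq_mul, sub_zero]
      _ ≤ ∫ τ in 0..t₀, u x₀ τ := by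
          refine integral_mono_on ht₀.le ((hwint.const_mul c).sub intervalIntegrable_const)
            (hu.intervalIntegrable_of_Icc ht₀.le) fun τ hτ => ?_
          have hcτ : c ≤ exp (-δ * τ) := exp_le_exp.2 (by nlinarith [hτ.2])
          have := hgap τ hτ
          simp only [comparisonGap] at this
          nlinarith [(hw01 τ hτ).1, hτ.2]
  exact mul_rpow_mul_exp_neg_le hk hv hvN hu₀ hua (mul_le_one₀ hc1 ha.1 ha.2) hm
    (by nlinarith [exp_pos (-δ * t₀)]) hI

theorem comparisonGap_pos_at_zero {n : ℕ} {Ω : Set (EuclideanSpace ℝ (Fin n))}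
    (hΩo : IsOpen Ω) {T δ ε : ℝ} (hT : 0 ≤ T) (hε : 0 < ε)
    {u₀ : EuclideanSpace ℝ (Fin n) → ℝ} {u w : EuclideanSpace ℝ (Fin n) → ℝ → ℝ}
    (hu₀nonneg : ∀ x ∈ closure Ω, 0 ≤ u₀ x)
    (hwbdry : ∀ x ∈ frontier Ω, ∀ t ∈ Icc (0 : ℝ) T, w x t = 0)
    (hwinit : ∀ x ∈ Ω, 0 ≤ w x 0 ∧ w x 0 ≤ min (u₀ x) 1)
    (huinit : ∀ x ∈ closure Ω, u x 0 = u₀ x) :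
    ∀ x ∈ closure Ω, 0 < comparisonGap u w δ ε x 0 := by
  intro x hx
  have hw0 : w x 0 ≤ u₀ x := by
    by_cases hxΩ : x ∈ Ω
    · exact (hwinit x hxΩ).2.trans (min_le_left _ _)
    · rw [hwbdry x (hΩo.frontier_eq ▸ ⟨hx, hxΩ⟩) 0 (left_mem_Icc.2 hT)]
      exact hu₀nonneg x hx
  simp only [comparisonGap, huinit x hx, mul_zero, exp_zero, one_mul, add_zero, mul_one]
  linarith

theorem comparisonGap_pos {n : ℕ} {Ω : Set (EuclideanSpace ℝ (Fin n))} (hΩo : IsOpen Ω)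
    (hΩb : Bornology.IsBounded Ω) {T m k δ ε N : ℝ} (hT : 0 ≤ T) (hm : 3 ≤ m) (hk : 0 ≤ k)
    (hε : 0 < ε) (hεδ : N * exp (-1) * exp (k * (T * (1 + T) * ε)) ≤ δ)
    {u₀ v₀ : EuclideanSpace ℝ (Fin n) → ℝ}
    (hu₀nonneg : ∀ x ∈ closure Ω, 0 ≤ u₀ x) (hv₀nonneg : ∀ x ∈ closure Ω, 0 ≤ v₀ x)
    (hsep : ∀ x ∈ closure Ω, u₀ x * v₀ x = 0) (hvN : ∀ x ∈ closure Ω, v₀ x ≤ N)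
    {w wt : EuclideanSpace ℝ (Fin n) → ℝ → ℝ}
    (hwcont : ContinuousOn (fun p : EuclideanSpace ℝ (Fin n) × ℝ => w p.1 p.2)
      (closure Ω ×ˢ Icc 0 T))
    (hwx : ∀ t ∈ Ioc 0 T, ContDiffOn ℝ 2 (fun y => w y t) Ω)
    (hwt : ∀ x ∈ Ω, ∀ t ∈ Icc (0 : ℝ) T, HasDerivWithinAt (w x) (wt x t) (Icc 0 T) t)
    (hwheat : ∀ x ∈ Ω, ∀ t ∈ Ioc 0 T, wt x t = laplacian (fun y => w y t) x)
    (hwbdry : ∀ x ∈ frontier Ω, ∀ t ∈ Icc (0 : ℝ) T, w x t = 0)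
    (hwinit : ∀ x ∈ Ω, 0 ≤ w x 0 ∧ w x 0 ≤ min (u₀ x) 1)
    (hw01 : ∀ x ∈ closure Ω, ∀ t ∈ Icc (0 : ℝ) T, 0 ≤ w x t ∧ w x t ≤ 1)
    (hwineq : ∀ x ∈ Ω, ∀ t ∈ Icc (0 : ℝ) T, 2 * wt x t ≤ 1)
    {u : EuclideanSpace ℝ (Fin n) → ℝ → ℝ}
    (hucont : ContinuousOn (fun p : EuclideanSpace ℝ (Fin n) × ℝ => u p.1 p.2)
      (closure Ω ×ˢ Icc 0 T))
    (hu_nonneg : ∀ x ∈ closure Ω, ∀ t ∈ Icc (0 : ℝ) T, 0 ≤ u x t)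
    (hux : ∀ t ∈ Ioc 0 T, ContDiffOn ℝ 2 (fun y => u y t) Ω)
    (hueq : ∀ x ∈ Ω, ∀ t ∈ Ioc 0 T,
      HasDerivWithinAt (u x)
        (laplacian (fun y => u y t) x
          - k * v₀ x * u x t ^ m * exp (-(k * ∫ τ in (0 : ℝ)..t, u x τ)))
        (Icc 0 T) t)
    (hubdry : ∀ x ∈ frontier Ω, ∀ t ∈ Ioc 0 T, u x t = 0)
    (huinit : ∀ x ∈ closure Ω, u x 0 = u₀ x) :
    ∀ x ∈ closure Ω, ∀ t ∈ Icc 0 T, 0 < comparisonGap u w δ ε x t := by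
  have hfrontier : ∀ x ∈ closure Ω, x ∉ Ω → x ∈ frontier Ω := fun x hx hxΩ =>
    hΩo.frontier_eq ▸ ⟨hx, hxΩ⟩
  by_contra! hneg
  obtain ⟨x₀, hx₀, t₀, ht₀, hgap₀, hgap⟩ := exists_first_zero_of_pos_at_zero
    hΩb.isCompact_closure (Z := comparisonGap u w δ ε)
    (hucont.sub ((continuous_exp.comp (continuous_const.mul continuous_snd)).continuousOn.mul
      hwcont) |>.add (by fun_prop))
    (comparisonGap_pos_at_zero hΩo hT hε hu₀nonneg hwbdry hwinit huinit) hneg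
  have ht₀T : t₀ ∈ Icc 0 T := Ioc_subset_Icc_self ht₀
  have hIcc : Icc 0 t₀ ⊆ Icc 0 T := Icc_subset_Icc_right ht₀.2
  have hx₀Ω : x₀ ∈ Ω := by
    by_contra hxΩ
    have hbd := hfrontier x₀ hx₀ hxΩ
    simp only [comparisonGap, hubdry x₀ hbd t₀ ht₀, hwbdry x₀ hbd t₀ ht₀T] at hgap₀
    nlinarith [ht₀.1]
  have hN : 0 ≤ N := (hv₀nonneg x₀ hx₀).trans (hvN x₀ hx₀)
  have hδ : 0 ≤ δ := le_trans (by positivity) hεδ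
  have hkey := add_le_of_isMinOn_comparisonGap hΩo hx₀Ω ht₀.1 (hux t₀ ht₀) (hwx t₀ ht₀)
    ((hueq x₀ hx₀Ω t₀ ht₀).mono hIcc)
    (hwheat x₀ hx₀Ω t₀ ht₀ ▸ (hwt x₀ hx₀Ω t₀ ht₀T).mono hIcc)
    (isMinOn_iff.2 fun y hy => hgap₀ ▸ hgap y (subset_closure hy) t₀ (right_mem_Icc.2 ht₀.1.le))
    (isMinOn_iff.2 fun τ hτ => hgap₀ ▸ hgap x₀ hx₀ τ hτ)
  have hpos : 0 < exp (-δ * t₀) * w x₀ t₀ := by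
    simp only [comparisonGap] at hgap₀
    nlinarith [hu_nonneg x₀ hx₀ t₀ ht₀T, ht₀.1]
  have hv₀ : 0 < v₀ x₀ := by
    refine (hv₀nonneg x₀ hx₀).lt_of_ne' fun hv => ?_
    simp only [hv, mul_zero, zero_mul] at hkey
    nlinarith
  have hw0 : w x₀ 0 = 0 := by
    have hu₀ : u₀ x₀ = 0 := (mul_eq_zero.1 (hsep x₀ hx₀)).resolve_right hv₀.ne'
    have := hwinit x₀ hx₀Ω
    rw [hu₀, min_eq_left zero_le_one] at this
    exact le_antisymm this.2 this.1
  have hu_cont : ContinuousOn (u x₀) (Icc 0 t₀) :=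
    hucont.comp (continuous_const.prodMk continuous_id).continuousOn fun τ hτ => ⟨hx₀, hIcc hτ⟩
  have hreact := reaction_le_of_comparisonGap_eq_zero ht₀.1 ht₀.2 hδ hε.le hk hv₀.le
    (hvN x₀ hx₀) hm hu_cont (hu_nonneg x₀ hx₀ t₀ ht₀T)
    (fun τ hτ => (hwt x₀ hx₀Ω τ (hIcc hτ)).mono hIcc) (fun τ hτ => hwineq x₀ hx₀Ω τ (hIcc hτ))
    hw0 (fun τ hτ => hw01 x₀ hx₀ τ (hIcc hτ)) (hgap x₀ hx₀) hgap₀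
  nlinarith [mul_le_mul_of_nonneg_right hεδ hpos.le]

theorem lower_bound_comparison'_general (n : ℕ)
    (Ω : Set (EuclideanSpace ℝ (Fin n))) (hΩo : IsOpen Ω) (hΩb : Bornology.IsBounded Ω)
    (T : ℝ) (hT : 0 < T)
    (m : ℝ) (hm3 : 3 ≤ m)
    (k : ℝ) (hk : 0 < k)
    (u₀ v₀ : EuclideanSpace ℝ (Fin n) → ℝ)
    (hv₀c : ContinuousOn v₀ (closure Ω))
    (hu₀nonneg : ∀ x ∈ closure Ω, 0 ≤ u₀ x) (hv₀nonneg : ∀ x ∈ closure Ω, 0 ≤ v₀ x)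
    (hsep : ∀ x ∈ closure Ω, u₀ x * v₀ x = 0)
    (δ : ℝ) (hδ : supNorm v₀ (closure Ω) * Real.exp (-1) < δ)
    -- the heat subsolution u̲ (denoted `w`) and its time derivative `wt`
    (w wt : EuclideanSpace ℝ (Fin n) → ℝ → ℝ)
    (hwcont : ContinuousOn (fun p : EuclideanSpace ℝ (Fin n) × ℝ => w p.1 p.2)
      (closure Ω ×ˢ Set.Icc 0 T))
    (hwx : ∀ t ∈ Set.Ioc 0 T, ContDiffOn ℝ 2 (fun y => w y t) Ω)
    (hwt : ∀ x ∈ Ω, ∀ t ∈ Set.Icc (0 : ℝ) T, HasDerivWithinAt (w x) (wt x t) (Set.Icc 0 T) t)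
    (hwheat : ∀ x ∈ Ω, ∀ t ∈ Set.Ioc 0 T, wt x t = laplacian (fun y => w y t) x)
    (hwbdry : ∀ x ∈ frontier Ω, ∀ t ∈ Set.Icc (0 : ℝ) T, w x t = 0)
    (hwinit : ∀ x ∈ Ω, 0 ≤ w x 0 ∧ w x 0 ≤ min (u₀ x) 1)
    (hw01 : ∀ x ∈ closure Ω, ∀ t ∈ Set.Icc (0 : ℝ) T, 0 ≤ w x t ∧ w x t ≤ 1)
    (hwineq : ∀ x ∈ Ω, ∀ t ∈ Set.Icc (0 : ℝ) T, 2 * wt x t ≤ 1)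
    -- the solution u of the scalar integro-differential equation
    (u : EuclideanSpace ℝ (Fin n) → ℝ → ℝ)
    (hucont : ContinuousOn (fun p : EuclideanSpace ℝ (Fin n) × ℝ => u p.1 p.2)
      (closure Ω ×ˢ Set.Icc 0 T))
    (hubound : ∀ x ∈ closure Ω, ∀ t ∈ Set.Icc (0 : ℝ) T,
      0 ≤ u x t ∧ u x t ≤ supNorm u₀ (closure Ω))
    (hux : ∀ t ∈ Set.Ioc 0 T, ContDiffOn ℝ 2 (fun y => u y t) Ω)
    (hueq : ∀ x ∈ Ω, ∀ t ∈ Set.Ioc 0 T,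
      HasDerivWithinAt (u x)
        (laplacian (fun y => u y t) x
          - k * v₀ x * u x t ^ m * Real.exp (-(k * ∫ τ in (0 : ℝ)..t, u x τ)))
        (Set.Icc 0 T) t)
    (hubdry : ∀ x ∈ frontier Ω, ∀ t ∈ Set.Ioc 0 T, u x t = 0)
    (huinit : ∀ x ∈ closure Ω, u x 0 = u₀ x) :
    ∀ x ∈ closure Ω, ∀ t ∈ Set.Icc (0 : ℝ) T, Real.exp (-δ * t) * w x t ≤ u x t := by
  set N := supNorm v₀ (closure Ω)
  have hvN : ∀ x ∈ closure Ω, v₀ x ≤ N := fun x hx =>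
    (le_abs_self _).trans (abs_le_supNorm hΩb.isCompact_closure hv₀c hx)
  have hεδ : ∀ᶠ ε in 𝓝 0, N * exp (-1) * exp (k * (T * (1 + T) * ε)) ≤ δ := by
    have : Continuous fun ε => N * exp (-1) * exp (k * (T * (1 + T) * ε)) := by fun_prop
    exact (this.tendsto 0).eventually (eventually_le_nhds (by simpa using hδ))
  intro x hx t ht
  have hsmall : ∀ᶠ ε in 𝓝[>] 0, exp (-δ * t) * w x t ≤ u x t + ε * (1 + t) := by
    filter_upwards [nhdsWithin_le_nhds hεδ, self_mem_nhdsWithin] with ε hεδ hε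
    have := comparisonGap_pos hΩo hΩb hT.le hm3 hk.le hε hεδ hu₀nonneg hv₀nonneg hsep hvN hwcont
      hwx hwt hwheat hwbdry hwinit hw01 hwineq hucont (fun x hx t ht => (hubound x hx t ht).1)
      hux hueq hubdry huinit x hx t ht
    simp only [comparisonGap] at this
    linarith
  refine ge_of_tendsto ?_ hsmall
  simpa using ((by fun_prop : Continuous fun ε : ℝ => u x t + ε * (1 + t)).tendsto 0).mono_left
    nhdsWithin_le_nhds

/-- Dirichlet version of Lemma 2.3, case `m ≥ 3`: a classical solution
`u` of `∂ₜ u = Δu − k v₀ u^m exp(−k ∫₀ᵗ u)` with homogeneous Dirichlet boundary values and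
initial datum `u₀` lies above `e^{−δt} u̲`, where `u̲` is a positive heat subsolution with
`0 ≤ u̲ ≤ 1`, `2 ∂ₜ u̲ ≤ 1` and `0 ≤ u̲(·,0) ≤ min{u₀, 1}`, provided
`δ > ‖v₀‖_{C(closure Ω)} e^{−1}`. -/
theorem lower_bound_comparison' (n : ℕ)
    (Ω : Set (EuclideanSpace ℝ (Fin n))) (hΩo : IsOpen Ω) (hΩb : Bornology.IsBounded Ω)
    (T : ℝ) (hT : 0 < T)
    (m : ℝ) (hm3 : 3 ≤ m)
    (k : ℝ) (hk : 0 < k)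
    (u₀ v₀ : EuclideanSpace ℝ (Fin n) → ℝ)
    (hu₀c : ContinuousOn u₀ (closure Ω)) (hv₀c : ContinuousOn v₀ (closure Ω))
    (hu₀nonneg : ∀ x ∈ closure Ω, 0 ≤ u₀ x) (hv₀nonneg : ∀ x ∈ closure Ω, 0 ≤ v₀ x)
    (hsep : ∀ x ∈ closure Ω, u₀ x * v₀ x = 0)
    (δ : ℝ) (hδ : supNorm v₀ (closure Ω) * Real.exp (-1) < δ)
    -- the heat subsolution u̲ (denoted `w`) and its time derivative `wt`
    (w wt : EuclideanSpace ℝ (Fin n) → ℝ → ℝ)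
    (hwcont : ContinuousOn (fun p : EuclideanSpace ℝ (Fin n) × ℝ => w p.1 p.2)
      (closure Ω ×ˢ Set.Icc 0 T))
    (hwx : ∀ t ∈ Set.Ioc 0 T, ContDiffOn ℝ 2 (fun y => w y t) Ω)
    (hwt : ∀ x ∈ Ω, ∀ t ∈ Set.Icc (0 : ℝ) T, HasDerivWithinAt (w x) (wt x t) (Set.Icc 0 T) t)
    (hwtc : ∀ x ∈ Ω, ContinuousOn (wt x) (Set.Icc 0 T))
    (hwheat : ∀ x ∈ Ω, ∀ t ∈ Set.Ioc 0 T, wt x t = laplacian (fun y => w y t) x)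
    (hwbdry : ∀ x ∈ frontier Ω, ∀ t ∈ Set.Icc (0 : ℝ) T, w x t = 0)
    (hwinit : ∀ x ∈ Ω, 0 ≤ w x 0 ∧ w x 0 ≤ min (u₀ x) 1)
    (hw01 : ∀ x ∈ closure Ω, ∀ t ∈ Set.Icc (0 : ℝ) T, 0 ≤ w x t ∧ w x t ≤ 1)
    (hwpos : ∀ x ∈ Ω, ∀ t ∈ Set.Ioc 0 T, 0 < w x t)
    (hwineq : ∀ x ∈ Ω, ∀ t ∈ Set.Icc (0 : ℝ) T, 2 * wt x t ≤ 1)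
    -- the solution u of the scalar integro-differential equation
    (u : EuclideanSpace ℝ (Fin n) → ℝ → ℝ)
    (hucont : ContinuousOn (fun p : EuclideanSpace ℝ (Fin n) × ℝ => u p.1 p.2)
      (closure Ω ×ˢ Set.Icc 0 T))
    (hubound : ∀ x ∈ closure Ω, ∀ t ∈ Set.Icc (0 : ℝ) T,
      0 ≤ u x t ∧ u x t ≤ supNorm u₀ (closure Ω))
    (hux : ∀ t ∈ Set.Ioc 0 T, ContDiffOn ℝ 2 (fun y => u y t) Ω)
    (hueq : ∀ x ∈ Ω, ∀ t ∈ Set.Ioc 0 T,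
      HasDerivWithinAt (u x)
        (laplacian (fun y => u y t) x
          - k * v₀ x * u x t ^ m * Real.exp (-(k * ∫ τ in (0 : ℝ)..t, u x τ)))
        (Set.Icc 0 T) t)
    (hubdry : ∀ x ∈ frontier Ω, ∀ t ∈ Set.Ioc 0 T, u x t = 0)
    (huinit : ∀ x ∈ closure Ω, u x 0 = u₀ x) :
    ∀ x ∈ closure Ω, ∀ t ∈ Set.Icc (0 : ℝ) T, Real.exp (-δ * t) * w x t ≤ u x t :=
  lower_bound_comparison'_general n Ω hΩo hΩb T hT m hm3 k hk u₀ v₀ hv₀c hu₀nonneg hv₀nonneg hsep δ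
    hδ w wt hwcont hwx hwt hwheat hwbdry hwinit hw01 hwineq u hucont hubound hux hueq hubdry huinit
end
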